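/- arXiv:1212.1065 — 2 statements merged into one kernel-verified Lean document; each statement's English description precedes it below -/
import Mathlib

section
/- The real algebraic subvariety X of (ℙ¹)³ defined by the trilinear equation u u' v'' − v v' v'' + u v' u'' + u' v u'' = 0 (in coordinates ([u:v],[u':v'],[u'':v''])) contains, for each pair of points x, y on the circle S¹ (parametrized as in the stereographic parametrization [u:v] ↦ (u²−v², 2uv)/(u²+v²)), the triple (x, y, (x·y)⁻¹): i.e., if z = x·y in the circle group then the trilinear form vanishes on the corresponding projective parameters of x, y, and z⁻¹. -/
/-!
Identify `ℝ²` with `ℂ`, so that the circle group becomes the unit complex numbers and its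
inverse becomes conjugation. The parameter `[u:v]` corresponds to `w = u + iv`, and the
parametrized point is `w / w̄`. If `w₁, w₂, w₃` parametrize `x`, `y` and `(x·y)⁻¹`, then
`w̄₁w̄₂ / (w₁w₂) = w₃ / w̄₃`, so `w₁w₂w₃` is real; its imaginary part is the trilinear form.
-/

open ComplexConjugate

namespace Complex

theorem equivRealProd_div_conj (w : ℂ) :
    equivRealProd (w / conj w) =
      ((w.re ^ 2 - w.im ^ 2) / (w.re ^ 2 + w.im ^ 2), 2 * w.re * w.im / (w.re ^ 2 + w.im ^ 2)) := by
  simp only [equivRealProd_apply, div_re, div_im, normSq_apply, conj_re, conj_im]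
  congr 1 <;> ring

theorem equivRealProd_mul (z w : ℂ) :
    equivRealProd (z * w) =
      ((equivRealProd z).1 * (equivRealProd w).1 - (equivRealProd z).2 * (equivRealProd w).2,
        (equivRealProd z).1 * (equivRealProd w).2 + (equivRealProd w).1 * (equivRealProd z).2) := by
  simp only [equivRealProd_apply, mul_re, mul_im]
  congr 1
  ring

theorem equivRealProd_conj (z : ℂ) :
    equivRealProd (conj z) = ((equivRealProd z).1, -(equivRealProd z).2) := by
  simp only [equivRealProd_apply, conj_re, conj_im]

theorem im_mul_eq_zero_of_conj_div_eq_div_conj {z w : ℂ} (h : conj z / z = w / conj w) :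
    (z * w).im = 0 := by
  rcases eq_or_ne z 0 with rfl | hz
  · simp
  rcases eq_or_ne w 0 with rfl | hw
  · simp
  rw [div_eq_div_iff hz ((map_ne_zero conj).2 hw)] at h
  rw [← conj_eq_iff_im, map_mul, h, mul_comm]

end Complex

open Complex in
theorem triple_on_trilinear_hypersurface_general
    (u v u' v' u'' v'' : ℝ)
    (x y z : ℝ × ℝ)
    (hx : x = ((u ^ 2 - v ^ 2) / (u ^ 2 + v ^ 2), 2 * u * v / (u ^ 2 + v ^ 2)))
    (hy : y = ((u' ^ 2 - v' ^ 2) / (u' ^ 2 + v' ^ 2), 2 * u' * v' / (u' ^ 2 + v' ^ 2)))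
    (hz : z = (x.1 * y.1 - x.2 * y.2, x.1 * y.2 + y.1 * x.2))
    (hzinv : (z.1, -z.2)
      = ((u'' ^ 2 - v'' ^ 2) / (u'' ^ 2 + v'' ^ 2), 2 * u'' * v'' / (u'' ^ 2 + v'' ^ 2))) :
    u * u' * v'' - v * v' * v'' + u * v' * u'' + u' * v * u'' = 0 := by
  set w₁ : ℂ := ⟨u, v⟩
  set w₂ : ℂ := ⟨u', v'⟩
  set w₃ : ℂ := ⟨u'', v''⟩
  have hxw : x = equivRealProd (w₁ / conj w₁) := by rw [hx, equivRealProd_div_conj]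
  have hyw : y = equivRealProd (w₂ / conj w₂) := by rw [hy, equivRealProd_div_conj]
  have hzw : z = equivRealProd (w₁ / conj w₁ * (w₂ / conj w₂)) := by
    rw [hz, hxw, hyw, equivRealProd_mul]
  have hxy_inv : conj (w₁ / conj w₁ * (w₂ / conj w₂)) = conj (w₁ * w₂) / (w₁ * w₂) := by
    rw [map_mul, map_div₀, map_div₀, conj_conj, conj_conj, map_mul, mul_div_mul_comm]
  have hconj : conj (w₁ * w₂) / (w₁ * w₂) = w₃ / conj w₃ := by
    apply equivRealProd.injective
    rw [equivRealProd_div_conj, ← hzinv, hzw, ← equivRealProd_conj, hxy_inv]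
  have him : (w₁ * w₂ * w₃).im = 0 := im_mul_eq_zero_of_conj_div_eq_div_conj hconj
  simp only [w₁, w₂, w₃, mul_im, mul_re] at him
  linear_combination him

/-- Let `S¹ = {(a,b) ∈ ℝ² : a² + b² = 1}` with multiplication
`(a,b)·(a',b') = (aa'−bb', ab'+a'b)` and inversion `(a,b)⁻¹ = (a,−b)`. If `x`, `y`, and
`(x·y)⁻¹` are the circle points with projective parameters `[u:v]`, `[u':v']`, `[u'':v'']`
under the parametrization `[u:v] ↦ ((u²−v²)/(u²+v²), 2uv/(u²+v²))`, then the trilinear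
form `u u' v'' − v v' v'' + u v' u'' + u' v u''` vanishes, i.e. the triple
`(x, y, (x·y)⁻¹)` lies on the `(1,1,1)`-hypersurface `X ⊂ (ℙ¹)³`. -/
theorem triple_on_trilinear_hypersurface
    (u v u' v' u'' v'' : ℝ)
    (h : u ^ 2 + v ^ 2 ≠ 0) (h' : u' ^ 2 + v' ^ 2 ≠ 0) (h'' : u'' ^ 2 + v'' ^ 2 ≠ 0)
    (x y z : ℝ × ℝ)
    (hx : x = ((u ^ 2 - v ^ 2) / (u ^ 2 + v ^ 2), 2 * u * v / (u ^ 2 + v ^ 2)))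
    (hy : y = ((u' ^ 2 - v' ^ 2) / (u' ^ 2 + v' ^ 2), 2 * u' * v' / (u' ^ 2 + v' ^ 2)))
    (hz : z = (x.1 * y.1 - x.2 * y.2, x.1 * y.2 + y.1 * x.2))
    (hzinv : (z.1, -z.2)
      = ((u'' ^ 2 - v'' ^ 2) / (u'' ^ 2 + v'' ^ 2), 2 * u'' * v'' / (u'' ^ 2 + v'' ^ 2))) :
    u * u' * v'' - v * v' * v'' + u * v' * u'' + u' * v * u'' = 0 :=
  triple_on_trilinear_hypersurface_general u v u' v' u'' v'' x y z hx hy hz hzinv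
end

section
/- The map φ([x]) = ([x − τ(x)𝟙], [x⁻¹ − τ(x⁻¹)𝟙]) is S₃-equivariant: for every σ ∈ S₃, φ(σ·[x]) = σ·φ([x]), where S₃ acts on classes [x] by σ[x] = [σ(x)^{sign σ}] and on ℙ(𝔱)×ℙ(𝔱) by σ([a],[b]) = ([σa],[σb]) if σ is even and ([σb],[σa]) if σ is odd. -/
/-- `cayleyVec x = x − τ(x)·𝟙` where `τ(x) = (x₁ + x₂ + x₃)/3`. -/
def cayleyVec (K : Type*) [Field K] (x : Fin 3 → Kˣ) : Fin 3 → K :=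
  fun i => (x i : K) - ((x 0 : K) + (x 1 : K) + (x 2 : K)) / 3

theorem cayleyVec_comp_perm {K : Type*} [Field K] (x : Fin 3 → Kˣ) (e : Equiv.Perm (Fin 3)) :
    cayleyVec K (fun i => x (e i)) = fun i => cayleyVec K x (e i) := by
  have hτ := Equiv.sum_comp e fun j => (x j : K)
  simp only [Fin.sum_univ_three] at hτ
  funext i
  simp only [cayleyVec, hτ]

theorem cayley_rational_map_equivariant_general (K : Type*) [Field K]
    (σ : Equiv.Perm (Fin 3)) (x : Fin 3 → Kˣ)
    (y : Fin 3 → Kˣ)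
    (hy : y = fun i => x (σ⁻¹ i) ^ ((Equiv.Perm.sign σ : ℤˣ) : ℤ)) :
    (cayleyVec K y, cayleyVec K y⁻¹) =
      if Equiv.Perm.sign σ = 1 then
        ((fun i => cayleyVec K x (σ⁻¹ i)), (fun i => cayleyVec K x⁻¹ (σ⁻¹ i)))
      else
        ((fun i => cayleyVec K x⁻¹ (σ⁻¹ i)), (fun i => cayleyVec K x (σ⁻¹ i))) := by
  subst hy
  rcases Int.units_eq_one_or (Equiv.Perm.sign σ) with hs | hs
  · simp only [hs, if_true, Units.val_one, zpow_one]
    exact Prod.ext (cayleyVec_comp_perm x σ⁻¹) (cayleyVec_comp_perm x⁻¹ σ⁻¹)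
  · have hy_inv : (fun i => x (σ⁻¹ i) ^ (-1 : ℤ))⁻¹ = fun i => x (σ⁻¹ i) := by
      funext i
      simp
    rw [hs, if_neg (by decide), Units.val_neg, Units.val_one, hy_inv]
    simp only [zpow_neg_one]
    exact Prod.ext (cayleyVec_comp_perm x⁻¹ σ⁻¹) (cayleyVec_comp_perm x σ⁻¹)

/-- The map `φ([x]) = ([x − τ(x)𝟙], [x⁻¹ − τ(x⁻¹)𝟙])` is `S₃`-equivariant, where `S₃`
acts on classes by `σ[x] = [σ(x)^{sign σ}]` and on `ℙ(𝔱) × ℙ(𝔱)` by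
`σ([a],[b]) = ([σa],[σb])` if `σ` is even and `([σb],[σa])` if `σ` is odd. (The
equivariance holds on the nose at the level of representing vectors.) -/
theorem cayley_rational_map_equivariant (K : Type*) [Field K] (h3 : (3 : K) ≠ 0)
    (σ : Equiv.Perm (Fin 3)) (x : Fin 3 → Kˣ)
    (y : Fin 3 → Kˣ)
    (hy : y = fun i => x (σ⁻¹ i) ^ ((Equiv.Perm.sign σ : ℤˣ) : ℤ)) :
    (cayleyVec K y, cayleyVec K y⁻¹) =
      if Equiv.Perm.sign σ = 1 then
        ((fun i => cayleyVec K x (σ⁻¹ i)), (fun i => cayleyVec K x⁻¹ (σ⁻¹ i)))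
      else
        ((fun i => cayleyVec K x⁻¹ (σ⁻¹ i)), (fun i => cayleyVec K x (σ⁻¹ i))) :=
  cayley_rational_map_equivariant_general K σ x y hy
end
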